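/- arXiv:2307.15143 — 7 statements merged into one kernel-verified Lean document; each statement's English description precedes it below -/
import Mathlib

section
/- Let V and X be real normed spaces, E, F : V → X linear maps, 0 < r < R, ε ∈ (0,1), and let τ : [0,∞) → [0,π/2] be a continuous nondecreasing function with τ(t)=0 for t ∈ [0,r], τ(t)=π/2 for t ∈ [R,∞), differentiable at every t > 0 except possibly at t = r and t = R, and satisfying 0 ≤ τ'(t) ≤ ε/t for r < t < R. Define T(x) = cos(τ(‖x‖))·E(x) + sin(τ(‖x‖))·F(x), G_θ(x) = cos(θ)·E(x) + sin(θ)·F(x), and g(θ,u) = ‖G_θ(u)‖. Then for all x, y ∈ V with x ≠ y and ‖x‖ ≥ ‖y‖ > 0, setting σ = τ(‖x‖), w = (x−y)/‖x−y‖, θ = π/2 + (τ(‖x‖)+τ(‖y‖))/2, and v = y/‖y‖, one has g(σ,w) − ε·g(θ,v) ≤ ‖T(x) − T(y)‖/‖x−y‖ ≤ g(σ,w) + ε·g(θ,v). -/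
open Set Real

/-!
Split `T x - T y` as `G_σ (x - y) + (G_σ - G_{τ‖y‖}) y`. By the sum-to-product formulas
`G_α - G_β = 2 sin ((α - β) / 2) • G_{π/2 + (α + β)/2}`, and `|2 sin (d / 2)| ≤ |d|`. The mean value
theorem on `[r, R]`, where `τ' ≤ ε / t`, gives `(τ‖x‖ - τ‖y‖) ‖y‖ ≤ ε (‖x‖ - ‖y‖) ≤ ε ‖x - y‖`, so the
second summand has norm at most `ε ‖x - y‖ g(θ, v)`, and the triangle inequality concludes.
-/

theorem sub_le_div_mul_sub_of_deriv_le_div {τ : ℝ → ℝ} {r R ε c₀ c₁ : ℝ} (hr : 0 < r)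
    (hrR : r < R) (hε : 0 ≤ ε) (hcont : ContinuousOn τ (Ici 0)) (hmono : MonotoneOn τ (Ici 0))
    (hzero : ∀ t ∈ Icc 0 r, τ t = c₀) (htop : ∀ t ∈ Ici R, τ t = c₁)
    (hdiff : ∀ t ∈ Ioo r R, DifferentiableAt ℝ τ t) (hderiv : ∀ t ∈ Ioo r R, deriv τ t ≤ ε / t)
    {a b : ℝ} (ha : 0 < a) (hab : a ≤ b) : τ b - τ a ≤ ε / a * (b - a) := by
  -- `τ` is constant off `[r, R]`, so `a` and `b` may be clamped into `[r, R]`.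
  have hτa : τ (max a r) = τ a := by
    rcases le_total r a with h | h
    · rw [max_eq_left h]
    · rw [max_eq_right h, hzero a ⟨ha.le, h⟩, hzero r ⟨hr.le, le_rfl⟩]
  have hτb : τ (min b R) = τ b := by
    rcases le_total b R with h | h
    · rw [min_eq_left h]
    · rw [min_eq_right h, htop b h, htop R self_mem_Ici]
  have hεa : 0 ≤ ε / a := div_nonneg hε ha.le
  rw [← hτa, ← hτb]
  rcases le_or_gt (min b R) (max a r) with h | h
  · have hb : 0 ≤ min b R := le_min (ha.le.trans hab) (hr.le.trans hrR.le)
    exact (sub_nonpos.2 (hmono hb (hb.trans h) h)).trans (mul_nonneg hεa (sub_nonneg.2 hab))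
  · have hIoo : Ioo (max a r) (min b R) ⊆ Ioo r R := fun t ht =>
      ⟨(le_max_right a r).trans_lt ht.1, ht.2.trans_le (min_le_right b R)⟩
    have hderiv_le : ∀ t ∈ interior (Icc (max a r) (min b R)), deriv τ t ≤ ε / a := by
      rw [interior_Icc]
      exact fun t ht => (hderiv t (hIoo ht)).trans
        (div_le_div_of_nonneg_left hε ha ((le_max_left a r).trans ht.1.le))
    calc τ (min b R) - τ (max a r) ≤ ε / a * (min b R - max a r) :=
          (convex_Icc _ _).image_sub_le_mul_sub_of_deriv_le
            (hcont.mono fun t ht => (ha.le.trans (le_max_left a r)).trans ht.1)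
            (by rw [interior_Icc]; exact fun t ht => (hdiff t (hIoo ht)).differentiableWithinAt)
            hderiv_le _ (left_mem_Icc.2 h.le) _ (right_mem_Icc.2 h.le) h.le
      _ ≤ ε / a * (b - a) :=
          mul_le_mul_of_nonneg_left (sub_le_sub (min_le_left b R) (le_max_left a r)) hεa

section

variable {V X : Type*} [NormedAddCommGroup V] [NormedSpace ℝ V] [NormedAddCommGroup X]
  [NormedSpace ℝ X] (E F : V →ₗ[ℝ] X)

noncomputable def trigCombination (θ : ℝ) : V →ₗ[ℝ] X := cos θ • E + sin θ • F

theorem trigCombination_apply (θ : ℝ) (u : V) :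
    trigCombination E F θ u = cos θ • E u + sin θ • F u := rfl

theorem trigCombination_sub_trigCombination (α β : ℝ) :
    trigCombination E F α - trigCombination E F β =
      (2 * sin ((α - β) / 2)) • trigCombination E F (π / 2 + (α + β) / 2) := by
  have hcos : cos (π / 2 + (α + β) / 2) = -sin ((α + β) / 2) := by
    rw [add_comm, cos_add_pi_div_two]
  have hsin : sin (π / 2 + (α + β) / 2) = cos ((α + β) / 2) := by
    rw [add_comm, sin_add_pi_div_two]
  ext u
  simp only [LinearMap.sub_apply, LinearMap.smul_apply, trigCombination_apply, hcos, hsin]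
  rw [add_sub_add_comm, ← sub_smul, ← sub_smul, cos_sub_cos, sin_sub_sin]
  module

theorem norm_trigCombination_sub_sub_le (α β : ℝ) (x y : V) :
    ‖trigCombination E F α x - trigCombination E F β y - trigCombination E F α (x - y)‖ ≤
      |α - β| * ‖trigCombination E F (π / 2 + (α + β) / 2) y‖ := by
  have : trigCombination E F α x - trigCombination E F β y - trigCombination E F α (x - y) =
      (trigCombination E F α - trigCombination E F β) y := by
    rw [map_sub, LinearMap.sub_apply]; abel
  rw [this, trigCombination_sub_trigCombination, LinearMap.smul_apply, norm_smul, norm_mul,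
    Real.norm_two, Real.norm_eq_abs]
  gcongr
  calc 2 * |sin ((α - β) / 2)| ≤ 2 * |(α - β) / 2| :=
        mul_le_mul_of_nonneg_left abs_sin_le_abs zero_le_two
    _ = |α - β| := by rw [abs_div, abs_two]; ring

theorem LinearMap.norm_apply_eq_norm_mul_norm_apply_smul_inv_norm (L : V →ₗ[ℝ] X) (u : V) :
    ‖L u‖ = ‖u‖ * ‖L (‖u‖⁻¹ • u)‖ := by
  rcases eq_or_ne u 0 with rfl | hu
  · simp
  · rw [map_smul, norm_smul, norm_inv, norm_norm, mul_inv_cancel_left₀ (norm_ne_zero_iff.2 hu)]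

end

theorem spiral_gluing_estimate_general
    (V X : Type*)
    [NormedAddCommGroup V] [NormedSpace ℝ V]
    [NormedAddCommGroup X] [NormedSpace ℝ X]
    (E F : V →ₗ[ℝ] X)
    (r R ε : ℝ) (hr : 0 < r) (hrR : r < R) (hε : ε ∈ Set.Ioo (0 : ℝ) 1)
    (τ : ℝ → ℝ)
    (hτcont : ContinuousOn τ (Set.Ici 0))
    (hτmono : MonotoneOn τ (Set.Ici 0))
    (hτzero : ∀ t ∈ Set.Icc (0 : ℝ) r, τ t = 0)
    (hτtop : ∀ t ∈ Set.Ici R, τ t = π / 2)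
    (hτdiff : ∀ t : ℝ, 0 < t → t ≠ r → t ≠ R → DifferentiableAt ℝ τ t)
    (hτderiv : ∀ t ∈ Set.Ioo r R, 0 ≤ deriv τ t ∧ deriv τ t ≤ ε / t)
    (T : V → X)
    (hT : ∀ x : V, T x = Real.cos (τ ‖x‖) • E x + Real.sin (τ ‖x‖) • F x)
    (g : ℝ → V → ℝ)
    (hg : ∀ (θ : ℝ) (u : V), g θ u = ‖Real.cos θ • E u + Real.sin θ • F u‖)
    (x y : V) (hxy : x ≠ y) (hy : 0 < ‖y‖) (hyx : ‖y‖ ≤ ‖x‖) :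
    g (τ ‖x‖) (‖x - y‖⁻¹ • (x - y)) - ε * g (π / 2 + (τ ‖x‖ + τ ‖y‖) / 2) (‖y‖⁻¹ • y)
        ≤ ‖T x - T y‖ / ‖x - y‖ ∧
      ‖T x - T y‖ / ‖x - y‖
        ≤ g (τ ‖x‖) (‖x - y‖⁻¹ • (x - y)) +
            ε * g (π / 2 + (τ ‖x‖ + τ ‖y‖) / 2) (‖y‖⁻¹ • y) := by
  have hε₀ : 0 ≤ ε := hε.1.le
  have hxy₀ : 0 < ‖x - y‖ := norm_pos_iff.2 (sub_ne_zero.2 hxy)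
  set G := trigCombination E F
  have hT' : ∀ z, T z = G (τ ‖z‖) z := hT
  have hg' : ∀ θ u, g θ u = ‖G θ u‖ := hg
  have hangle : (τ ‖x‖ - τ ‖y‖) * ‖y‖ ≤ ε * ‖x - y‖ := by
    have := sub_le_div_mul_sub_of_deriv_le_div hr hrR hε₀ hτcont hτmono hτzero hτtop
      (fun t ht => hτdiff t (hr.trans ht.1) ht.1.ne' ht.2.ne) (fun t ht => (hτderiv t ht).2)
      hy hyx
    calc (τ ‖x‖ - τ ‖y‖) * ‖y‖ ≤ ε / ‖y‖ * (‖x‖ - ‖y‖) * ‖y‖ :=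
          mul_le_mul_of_nonneg_right this hy.le
      _ = ε * (‖x‖ - ‖y‖) := by field_simp
      _ ≤ ε * ‖x - y‖ := mul_le_mul_of_nonneg_left (norm_sub_norm_le x y) hε₀
  have hτ_sub_nonneg : 0 ≤ τ ‖x‖ - τ ‖y‖ := sub_nonneg.2 (hτmono hy.le (hy.le.trans hyx) hyx)
  set θ := π / 2 + (τ ‖x‖ + τ ‖y‖) / 2
  have hclose : |‖T x - T y‖ - ‖x - y‖ * g (τ ‖x‖) (‖x - y‖⁻¹ • (x - y))| ≤
      ‖x - y‖ * (ε * g θ (‖y‖⁻¹ • y)) := by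
    rw [hg', hg', ← LinearMap.norm_apply_eq_norm_mul_norm_apply_smul_inv_norm, hT', hT']
    calc _ ≤ ‖G (τ ‖x‖) x - G (τ ‖y‖) y - G (τ ‖x‖) (x - y)‖ := abs_norm_sub_norm_le _ _
      _ ≤ |τ ‖x‖ - τ ‖y‖| * ‖G θ y‖ := norm_trigCombination_sub_sub_le E F _ _ x y
      _ = (τ ‖x‖ - τ ‖y‖) * ‖y‖ * ‖G θ (‖y‖⁻¹ • y)‖ := by
          rw [abs_of_nonneg hτ_sub_nonneg,
            LinearMap.norm_apply_eq_norm_mul_norm_apply_smul_inv_norm, mul_assoc]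
      _ ≤ ε * ‖x - y‖ * ‖G θ (‖y‖⁻¹ • y)‖ := by gcongr
      _ = ‖x - y‖ * (ε * ‖G θ (‖y‖⁻¹ • y)‖) := by ring
  obtain ⟨hle, hge⟩ := abs_sub_le_iff.1 hclose
  constructor
  · rw [le_div_iff₀ hxy₀]; linarith
  · rw [div_le_iff₀ hxy₀]; linarith

/-- **Proposition (key derivative-type estimate for the logarithmic spiral gluing).**
With `T x = cos(τ‖x‖) • E x + sin(τ‖x‖) • F x` and `g θ u = ‖cos θ • E u + sin θ • F u‖`,
for `x ≠ y` with `‖x‖ ≥ ‖y‖ > 0` one has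
`g σ w - ε g θ v ≤ ‖T x - T y‖ / ‖x - y‖ ≤ g σ w + ε g θ v`,
where `σ = τ‖x‖`, `w = (x-y)/‖x-y‖`, `θ = π/2 + (τ‖x‖+τ‖y‖)/2`, `v = y/‖y‖`. -/
theorem spiral_gluing_estimate
    (V X : Type*)
    [NormedAddCommGroup V] [NormedSpace ℝ V]
    [NormedAddCommGroup X] [NormedSpace ℝ X]
    (E F : V →ₗ[ℝ] X)
    (r R ε : ℝ) (hr : 0 < r) (hrR : r < R) (hε : ε ∈ Set.Ioo (0 : ℝ) 1)
    (τ : ℝ → ℝ)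
    (hτrange : ∀ t ∈ Set.Ici (0 : ℝ), τ t ∈ Set.Icc 0 (π / 2))
    (hτcont : ContinuousOn τ (Set.Ici 0))
    (hτmono : MonotoneOn τ (Set.Ici 0))
    (hτzero : ∀ t ∈ Set.Icc (0 : ℝ) r, τ t = 0)
    (hτtop : ∀ t ∈ Set.Ici R, τ t = π / 2)
    (hτdiff : ∀ t : ℝ, 0 < t → t ≠ r → t ≠ R → DifferentiableAt ℝ τ t)
    (hτderiv : ∀ t ∈ Set.Ioo r R, 0 ≤ deriv τ t ∧ deriv τ t ≤ ε / t)
    (T : V → X)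
    (hT : ∀ x : V, T x = Real.cos (τ ‖x‖) • E x + Real.sin (τ ‖x‖) • F x)
    (g : ℝ → V → ℝ)
    (hg : ∀ (θ : ℝ) (u : V), g θ u = ‖Real.cos θ • E u + Real.sin θ • F u‖)
    (x y : V) (hxy : x ≠ y) (hy : 0 < ‖y‖) (hyx : ‖y‖ ≤ ‖x‖) :
    g (τ ‖x‖) (‖x - y‖⁻¹ • (x - y)) - ε * g (π / 2 + (τ ‖x‖ + τ ‖y‖) / 2) (‖y‖⁻¹ • y)
        ≤ ‖T x - T y‖ / ‖x - y‖ ∧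
      ‖T x - T y‖ / ‖x - y‖
        ≤ g (τ ‖x‖) (‖x - y‖⁻¹ • (x - y)) +
            ε * g (π / 2 + (τ ‖x‖ + τ ‖y‖) / 2) (‖y‖⁻¹ • y) :=
  spiral_gluing_estimate_general V X E F r R ε hr hrR hε τ hτcont hτmono hτzero hτtop hτdiff hτderiv
    T hT g hg x y hxy hy hyx
end

section
/- Let V and X be real normed spaces, E, F : V → X linear maps, 0 < r < R, ε ∈ (0,1), γ > 0, β > 0, and let τ : [0,∞) → [0,π/2] be a continuous nondecreasing function with τ(t)=0 on [0,r], τ(t)=π/2 on [R,∞), differentiable except possibly at r and R, with 0 ≤ τ'(t) ≤ ε/t on (r,R). Assume 1 ≤ ‖E(u)‖ ≤ 1+γ and 1 ≤ ‖F(u)‖ ≤ 1+γ for every unit vector u ∈ V. Define T(x) = cos(τ(‖x‖))·E(x) + sin(τ(‖x‖))·F(x). If x, y ∈ V satisfy x ≠ y, ‖x‖ ≥ ‖y‖ > 0 and ‖cos(τ(‖x‖))·E(w) + sin(τ(‖x‖))·F(w)‖ ≥ β for w = (x−y)/‖x−y‖, then β − ε·√2·(1+γ) ≤ ‖T(x)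 − T(y)‖/‖x−y‖ ≤ √2·(1+γ) + ε·√2·(1+γ). -/
/-!
Write `L θ = cos θ • E + sin θ • F`, so that `T x = L (τ ‖x‖) x` and
`T x - T y = L (τ ‖x‖) (x - y) + (L (τ ‖x‖) y - L (τ ‖y‖) y)`.
Since `|cos θ| + |sin θ| ≤ √2`, the first term lies between `β ‖x - y‖` and `√2 (1 + γ) ‖x - y‖`.
The curve `θ ↦ L θ y` has speed at most `√2 (1 + γ) ‖y‖`, and the mean value theorem applied to
`τ` on `[max ‖y‖ r, min ‖x‖ R]`, where `τ' ≤ ε / t ≤ ε / ‖y‖`, gives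
`τ ‖x‖ - τ ‖y‖ ≤ ε (‖x‖ - ‖y‖) / ‖y‖ ≤ ε ‖x - y‖ / ‖y‖`; so the second term is at most
`ε √2 (1 + γ) ‖x - y‖`.
-/

open Set Real

theorem abs_sin_add_abs_cos_le_sqrt_two (t : ℝ) : |sin t| + |cos t| ≤ √2 := by
  rw [le_sqrt (by positivity) zero_le_two]
  nlinarith [sin_sq_add_cos_sq t, sq_abs (sin t), sq_abs (cos t), sq_nonneg (|sin t| - |cos t|)]

theorem sub_le_norm_add_div_and_norm_add_div_le {X : Type*} [NormedAddCommGroup X] {M N : X}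
    {d β A B : ℝ} (hd : 0 < d) (hMlow : β * d ≤ ‖M‖) (hMup : ‖M‖ ≤ A * d) (hN : ‖N‖ ≤ B * d) :
    β - B ≤ ‖M + N‖ / d ∧ ‖M + N‖ / d ≤ A + B := by
  constructor
  · rw [le_div_iff₀ hd]
    linarith [norm_sub_le_norm_add M N]
  · rw [div_le_iff₀ hd]
    linarith [norm_add_le M N]

section CosSin

variable {X : Type*} [NormedAddCommGroup X] [NormedSpace ℝ X]

theorem norm_cos_smul_add_sin_smul_le {a b : X} {C : ℝ} (ha : ‖a‖ ≤ C) (hb : ‖b‖ ≤ C)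
    (θ : ℝ) : ‖cos θ • a + sin θ • b‖ ≤ √2 * C := by
  have hC : 0 ≤ C := (norm_nonneg a).trans ha
  calc ‖cos θ • a + sin θ • b‖ ≤ |cos θ| * ‖a‖ + |sin θ| * ‖b‖ := by
        simpa only [norm_smul, norm_eq_abs] using norm_add_le (cos θ • a) (sin θ • b)
    _ ≤ (|sin θ| + |cos θ|) * C := by
        nlinarith [abs_nonneg (cos θ), abs_nonneg (sin θ)]
    _ ≤ √2 * C := mul_le_mul_of_nonneg_right (abs_sin_add_abs_cos_le_sqrt_two θ) hC

theorem norm_cos_smul_add_sin_smul_sub_le {a b : X} {C : ℝ} (ha : ‖a‖ ≤ C) (hb : ‖b‖ ≤ C)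
    (s t : ℝ) :
    ‖(cos s • a + sin s • b) - (cos t • a + sin t • b)‖ ≤ √2 * C * |s - t| := by
  have hderiv : ∀ θ ∈ univ, HasDerivWithinAt (fun θ => cos θ • a + sin θ • b)
      (cos θ • b + sin θ • (-a)) univ θ := by
    intro θ _
    refine HasDerivAt.hasDerivWithinAt ?_
    convert ((hasDerivAt_cos θ).smul_const a).fun_add ((hasDerivAt_sin θ).smul_const b) using 1
    module
  simpa only [norm_eq_abs] using convex_univ.norm_image_sub_le_of_norm_hasDerivWithin_le hderiv
    (fun θ _ => norm_cos_smul_add_sin_smul_le hb (by rwa [norm_neg]) θ) (mem_univ t) (mem_univ s)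

end CosSin

section LinearMap

variable {V X : Type*} [NormedAddCommGroup V] [NormedSpace ℝ V]
  [NormedAddCommGroup X] [NormedSpace ℝ X]

theorem LinearMap.norm_map_eq_norm_mul_norm_map_inv_norm_smul (f : V →ₗ[ℝ] X) {v : V}
    (hv : v ≠ 0) : ‖f v‖ = ‖v‖ * ‖f (‖v‖⁻¹ • v)‖ := by
  rw [map_smul, norm_smul, norm_inv, norm_norm, mul_inv_cancel_left₀ (norm_ne_zero_iff.2 hv)]

theorem LinearMap.norm_map_le_of_forall_norm_eq_one {f : V →ₗ[ℝ] X} {C : ℝ}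
    (hf : ∀ u : V, ‖u‖ = 1 → ‖f u‖ ≤ C) (v : V) : ‖f v‖ ≤ C * ‖v‖ := by
  rcases eq_or_ne v 0 with rfl | hv
  · simp
  rw [f.norm_map_eq_norm_mul_norm_map_inv_norm_smul hv, mul_comm]
  exact mul_le_mul_of_nonneg_right (hf _ (norm_smul_inv_norm hv)) (norm_nonneg v)

noncomputable def cosSinComb (E F : V →ₗ[ℝ] X) (θ : ℝ) : V →ₗ[ℝ] X := cos θ • E + sin θ • F

@[simp]
theorem cosSinComb_apply (E F : V →ₗ[ℝ] X) (θ : ℝ) (v : V) :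
    cosSinComb E F θ v = cos θ • E v + sin θ • F v := rfl

variable {E F : V →ₗ[ℝ] X} {C : ℝ}

theorem norm_cosSinComb_le (hE : ∀ u : V, ‖u‖ = 1 → ‖E u‖ ≤ C)
    (hF : ∀ u : V, ‖u‖ = 1 → ‖F u‖ ≤ C) (θ : ℝ) {u : V} (hu : ‖u‖ = 1) :
    ‖cosSinComb E F θ u‖ ≤ √2 * C :=
  norm_cos_smul_add_sin_smul_le (hE u hu) (hF u hu) θ

theorem norm_cosSinComb_sub_le (hE : ∀ u : V, ‖u‖ = 1 → ‖E u‖ ≤ C)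
    (hF : ∀ u : V, ‖u‖ = 1 → ‖F u‖ ≤ C) (s t : ℝ) (v : V) :
    ‖cosSinComb E F s v - cosSinComb E F t v‖ ≤ √2 * C * ‖v‖ * |s - t| := by
  rw [cosSinComb_apply, cosSinComb_apply, mul_assoc √2]
  exact norm_cos_smul_add_sin_smul_sub_le (LinearMap.norm_map_le_of_forall_norm_eq_one hE v)
    (LinearMap.norm_map_le_of_forall_norm_eq_one hF v) s t

end LinearMap

section Profile

variable {τ : ℝ → ℝ} {r R ε : ℝ}

theorem image_sub_le_div_mul_sub_of_deriv_le_div (hcont : ContinuousOn τ (Icc r R))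
    (hdiff : ∀ t ∈ Ioo r R, DifferentiableAt ℝ τ t)
    (hderiv : ∀ t ∈ Ioo r R, deriv τ t ≤ ε / t) (hε : 0 ≤ ε) {a b : ℝ} (ha₀ : 0 < a)
    (ha : r ≤ a) (hab : a ≤ b) (hb : b ≤ R) : τ b - τ a ≤ ε / a * (b - a) := by
  have hsub : Ioo a b ⊆ Ioo r R := Ioo_subset_Ioo ha hb
  refine (convex_Icc a b).image_sub_le_mul_sub_of_deriv_le (hcont.mono (Icc_subset_Icc ha hb))
    ?_ ?_ a (left_mem_Icc.2 hab) b (right_mem_Icc.2 hab) hab <;> rw [interior_Icc]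
  · exact fun t ht => (hdiff t (hsub ht)).differentiableWithinAt
  · exact fun t ht => (hderiv t (hsub ht)).trans (div_le_div_of_nonneg_left hε ha₀ ht.1.le)

theorem sub_le_mul_sub_div_of_deriv_le_div_of_const_outside (hrR : r < R)
    (hcont : ContinuousOn τ (Icc r R)) (hdiff : ∀ t ∈ Ioo r R, DifferentiableAt ℝ τ t)
    (hderiv : ∀ t ∈ Ioo r R, deriv τ t ≤ ε / t) (hε : 0 ≤ ε) {c₀ c₁ : ℝ}
    (hlow : ∀ t ∈ Icc 0 r, τ t = c₀) (hhigh : ∀ t ∈ Ici R, τ t = c₁) {a b : ℝ} (ha : 0 < a)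
    (hab : a ≤ b) : τ b - τ a ≤ ε * (b - a) / a := by
  have hrhs : 0 ≤ ε * (b - a) / a := div_nonneg (mul_nonneg hε (sub_nonneg.2 hab)) ha.le
  rcases le_or_gt b r with hbr | hrb
  · rw [hlow a ⟨ha.le, hab.trans hbr⟩, hlow b ⟨ha.le.trans hab, hbr⟩, sub_self]
    exact hrhs
  rcases le_or_gt R a with hRa | haR
  · rw [hhigh a hRa, hhigh b (hRa.trans hab), sub_self]
    exact hrhs
  have hτa : τ a = τ (max a r) := by
    rcases le_total a r with h | h
    · rw [max_eq_right h, hlow a ⟨ha.le, h⟩, hlow r ⟨ha.le.trans h, le_rfl⟩]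
    · rw [max_eq_left h]
  have hτb : τ b = τ (min b R) := by
    rcases le_total b R with h | h
    · rw [min_eq_left h]
    · rw [min_eq_right h, hhigh b h, hhigh R self_mem_Ici]
  have hclamp : max a r ≤ min b R := max_le_iff.2 ⟨le_min hab haR.le, le_min hrb.le hrR.le⟩
  calc τ b - τ a = τ (min b R) - τ (max a r) := by rw [hτa, hτb]
    _ ≤ ε / max a r * (min b R - max a r) :=
        image_sub_le_div_mul_sub_of_deriv_le_div hcont hdiff hderiv hε
          (ha.trans_le (le_max_left a r)) (le_max_right a r) hclamp (min_le_right b R)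
    _ ≤ ε / a * (b - a) := by
        gcongr
        exacts [le_max_left a r, min_le_left b R, le_max_left a r]
    _ = ε * (b - a) / a := by ring

end Profile

theorem spiral_gluing_bilipschitz_bounds_general
    (V X : Type*)
    [NormedAddCommGroup V] [NormedSpace ℝ V]
    [NormedAddCommGroup X] [NormedSpace ℝ X]
    (E F : V →ₗ[ℝ] X)
    (r R ε γ β : ℝ) (hr : 0 < r) (hrR : r < R)
    (hε : ε ∈ Set.Ioo (0 : ℝ) 1) (hγ : 0 < γ)
    (τ : ℝ → ℝ)
    (hτcont : ContinuousOn τ (Set.Ici 0))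
    (hτmono : MonotoneOn τ (Set.Ici 0))
    (hτzero : ∀ t ∈ Set.Icc (0 : ℝ) r, τ t = 0)
    (hτtop : ∀ t ∈ Set.Ici R, τ t = π / 2)
    (hτdiff : ∀ t : ℝ, 0 < t → t ≠ r → t ≠ R → DifferentiableAt ℝ τ t)
    (hτderiv : ∀ t ∈ Set.Ioo r R, 0 ≤ deriv τ t ∧ deriv τ t ≤ ε / t)
    (hE : ∀ u : V, ‖u‖ = 1 → 1 ≤ ‖E u‖ ∧ ‖E u‖ ≤ 1 + γ)
    (hF : ∀ u : V, ‖u‖ = 1 → 1 ≤ ‖F u‖ ∧ ‖F u‖ ≤ 1 + γ)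
    (T : V → X)
    (hT : ∀ x : V, T x = Real.cos (τ ‖x‖) • E x + Real.sin (τ ‖x‖) • F x)
    (x y : V) (hxy : x ≠ y) (hy : 0 < ‖y‖) (hyx : ‖y‖ ≤ ‖x‖)
    (hlow : β ≤ ‖Real.cos (τ ‖x‖) • E (‖x - y‖⁻¹ • (x - y)) +
        Real.sin (τ ‖x‖) • F (‖x - y‖⁻¹ • (x - y))‖) :
    β - ε * Real.sqrt 2 * (1 + γ) ≤ ‖T x - T y‖ / ‖x - y‖ ∧
      ‖T x - T y‖ / ‖x - y‖ ≤ Real.sqrt 2 * (1 + γ) + ε * Real.sqrt 2 * (1 + γ) := by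
  have hxy' : x - y ≠ 0 := sub_ne_zero.2 hxy
  have hd : 0 < ‖x - y‖ := norm_pos_iff.2 hxy'
  have hEC : ∀ u : V, ‖u‖ = 1 → ‖E u‖ ≤ 1 + γ := fun u hu => (hE u hu).2
  have hFC : ∀ u : V, ‖u‖ = 1 → ‖F u‖ ≤ 1 + γ := fun u hu => (hF u hu).2
  set L := cosSinComb E F
  have hsplit : T x - T y = L (τ ‖x‖) (x - y) + (L (τ ‖x‖) y - L (τ ‖y‖) y) := by
    simp only [L, hT, cosSinComb_apply, map_sub]
    module
  have hscale := (L (τ ‖x‖)).norm_map_eq_norm_mul_norm_map_inv_norm_smul hxy'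
  have hτ : |τ ‖x‖ - τ ‖y‖| ≤ ε * ‖x - y‖ / ‖y‖ := by
    rw [abs_of_nonneg (sub_nonneg.2 (hτmono (norm_nonneg y) (norm_nonneg x) hyx))]
    calc τ ‖x‖ - τ ‖y‖ ≤ ε * (‖x‖ - ‖y‖) / ‖y‖ :=
          sub_le_mul_sub_div_of_deriv_le_div_of_const_outside hrR
            (hτcont.mono fun t ht => hr.le.trans ht.1)
            (fun t ht => hτdiff t (hr.trans ht.1) ht.1.ne' ht.2.ne)
            (fun t ht => (hτderiv t ht).2) hε.1.le hτzero hτtop hy hyx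
      _ ≤ ε * ‖x - y‖ / ‖y‖ := by gcongr; exacts [hε.1.le, norm_sub_norm_le x y]
  rw [hsplit]
  refine sub_le_norm_add_div_and_norm_add_div_le hd ?_ ?_ ?_
  · rw [hscale, mul_comm β]
    exact mul_le_mul_of_nonneg_left hlow hd.le
  · rw [hscale, mul_comm (√2 * (1 + γ))]
    exact mul_le_mul_of_nonneg_left
      (norm_cosSinComb_le hEC hFC _ (norm_smul_inv_norm hxy')) hd.le
  · calc ‖L (τ ‖x‖) y - L (τ ‖y‖) y‖ ≤ √2 * (1 + γ) * ‖y‖ * |τ ‖x‖ - τ ‖y‖| :=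
          norm_cosSinComb_sub_le hEC hFC _ _ y
      _ ≤ √2 * (1 + γ) * ‖y‖ * (ε * ‖x - y‖ / ‖y‖) := by gcongr
      _ = ε * √2 * (1 + γ) * ‖x - y‖ := by field_simp

/-- **Proposition (bilipschitz-type bounds on each gluing zone).**
Under the spiral gluing hypotheses, if the glued direction `w = (x-y)/‖x-y‖` satisfies the
lower bound `‖cos(τ‖x‖) • E w + sin(τ‖x‖) • F w‖ ≥ β`, then
`β - ε√2(1+γ) ≤ ‖T x - T y‖/‖x-y‖ ≤ √2(1+γ) + ε√2(1+γ)`. -/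
theorem spiral_gluing_bilipschitz_bounds
    (V X : Type*)
    [NormedAddCommGroup V] [NormedSpace ℝ V]
    [NormedAddCommGroup X] [NormedSpace ℝ X]
    (E F : V →ₗ[ℝ] X)
    (r R ε γ β : ℝ) (hr : 0 < r) (hrR : r < R)
    (hε : ε ∈ Set.Ioo (0 : ℝ) 1) (hγ : 0 < γ) (hβ : 0 < β)
    (τ : ℝ → ℝ)
    (hτrange : ∀ t ∈ Set.Ici (0 : ℝ), τ t ∈ Set.Icc 0 (π / 2))
    (hτcont : ContinuousOn τ (Set.Ici 0))
    (hτmono : MonotoneOn τ (Set.Ici 0))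
    (hτzero : ∀ t ∈ Set.Icc (0 : ℝ) r, τ t = 0)
    (hτtop : ∀ t ∈ Set.Ici R, τ t = π / 2)
    (hτdiff : ∀ t : ℝ, 0 < t → t ≠ r → t ≠ R → DifferentiableAt ℝ τ t)
    (hτderiv : ∀ t ∈ Set.Ioo r R, 0 ≤ deriv τ t ∧ deriv τ t ≤ ε / t)
    (hE : ∀ u : V, ‖u‖ = 1 → 1 ≤ ‖E u‖ ∧ ‖E u‖ ≤ 1 + γ)
    (hF : ∀ u : V, ‖u‖ = 1 → 1 ≤ ‖F u‖ ∧ ‖F u‖ ≤ 1 + γ)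
    (T : V → X)
    (hT : ∀ x : V, T x = Real.cos (τ ‖x‖) • E x + Real.sin (τ ‖x‖) • F x)
    (x y : V) (hxy : x ≠ y) (hy : 0 < ‖y‖) (hyx : ‖y‖ ≤ ‖x‖)
    (hlow : β ≤ ‖Real.cos (τ ‖x‖) • E (‖x - y‖⁻¹ • (x - y)) +
        Real.sin (τ ‖x‖) • F (‖x - y‖⁻¹ • (x - y))‖) :
    β - ε * Real.sqrt 2 * (1 + γ) ≤ ‖T x - T y‖ / ‖x - y‖ ∧
      ‖T x - T y‖ / ‖x - y‖ ≤ Real.sqrt 2 * (1 + γ) + ε * Real.sqrt 2 * (1 + γ) :=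
  spiral_gluing_bilipschitz_bounds_general V X E F r R ε γ β hr hrR hε hγ τ hτcont hτmono hτzero
    hτtop hτdiff hτderiv hE hF T hT x y hxy hy hyx hlow
end

section
/- Every bounded sequence (x_n) in a real Banach space X contains a subsequence (e_n) with the following property: for every finitely supported sequence of reals a = (a_1, a_2, …) there exists a real number L(a) such that for every ε > 0 there exists a positive integer ν such that |‖Σ_i a_i·e_{n_i}‖ − L(a)| ≤ ε for all strictly increasing sequences of integers ν ≤ n_1 < n_2 < ⋯ indexing the support of a. -/
/-!
For a bounded function `g` on increasing `k`-tuples of naturals and `ε > 0`, every infinite set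
contains an infinite set on whose `k`-tuples `g` oscillates by at most `ε`: by induction on `k`,
fix the first entry and stabilise in the others along a diagonal sequence, then pass to a
subsequence along which the values with frozen first entry converge. Diagonalising once more over
the countably many pairs (rational coefficient vector `q`, tolerance `1 / (m + 1)`) gives one
subsequence `φ` along which every `s ↦ ‖∑ q_t • x_{φ(s_t)}‖` is Cauchy as the tuples move to
infinity. These norms are Lipschitz in the coefficients uniformly in `s`, so the same holds for
real coefficients, and completeness of `ℝ` provides the limit `L(a)`.
-/

open Set

def OscillationLE {β α : Type*} [PseudoMetricSpace α] (g : β → α) (A : Set β) (ε : ℝ) : Prop :=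
  ∀ s ∈ A, ∀ t ∈ A, dist (g s) (g t) ≤ ε

lemma OscillationLE.mono {β α : Type*} [PseudoMetricSpace α] {g : β → α} {A B : Set β} {ε : ℝ}
    (h : OscillationLE g A ε) (hBA : B ⊆ A) : OscillationLE g B ε :=
  fun s hs t ht => h s (hBA hs) t (hBA ht)

def increasingTuples (k : ℕ) (T : Set ℕ) : Set (Fin k → ℕ) := {s | StrictMono s ∧ range s ⊆ T}

lemma increasingTuples_mono {k : ℕ} {T T' : Set ℕ} (h : T ⊆ T') :
    increasingTuples k T ⊆ increasingTuples k T' :=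
  fun _ hs => ⟨hs.1, hs.2.trans h⟩

lemma shift_mem_increasingTuples {φ : ℕ → ℕ} (hφ : StrictMono φ) (k ν : ℕ) :
    (fun t : Fin k => φ (ν + 1 + t)) ∈ increasingTuples k (φ '' Ioi ν) :=
  ⟨hφ.comp fun _ _ h => by simpa using h, by rintro _ ⟨t, rfl⟩; exact ⟨_, by simp; omega, rfl⟩⟩

lemma tail_mem_increasingTuples {φ : ℕ → ℕ} (hφ : StrictMono φ) {k i : ℕ} {A : Set ℕ}
    {s : Fin (k + 1) → ℕ} (hs : s ∈ increasingTuples (k + 1) (φ '' A)) (h0 : s 0 = φ i) :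
    Fin.tail s ∈ increasingTuples k (φ '' Ioi i) := by
  refine ⟨hs.1.comp Fin.strictMono_succ, ?_⟩
  rintro _ ⟨t, rfl⟩
  obtain ⟨j, -, hj⟩ := hs.2 (mem_range_self t.succ)
  refine ⟨j, ?_, hj⟩
  have : s 0 < s t.succ := hs.1 t.succ_pos
  rw [h0, ← hj] at this
  exact hφ.lt_iff_lt.1 this

lemma Set.Infinite.inter_Ioi {S : Set ℕ} (hS : S.Infinite) (m : ℕ) : (S ∩ Ioi m).Infinite :=
  (hS.sdiff (finite_Iic m)).mono fun _ hx => ⟨hx.1, not_le.1 (mt mem_Iic.2 hx.2)⟩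

theorem exists_strictMono_diagonal {Q : ℕ → ℕ → Set ℕ → Prop}
    (hQ_anti : ∀ i m T T', T' ⊆ T → Q i m T → Q i m T')
    (hQ : ∀ i S, S.Infinite → ∃ m ∈ S, ∃ T ⊆ S ∩ Ioi m, T.Infinite ∧ Q i m T)
    {S : Set ℕ} (hS : S.Infinite) :
    ∃ φ : ℕ → ℕ, StrictMono φ ∧ range φ ⊆ S ∧ ∀ i, Q i (φ i) (φ '' Ioi i) := by
  choose m hmS T hTS hT hQT using hQ
  let U : ℕ → {S : Set ℕ // S.Infinite} :=
    fun i => Nat.rec ⟨S, hS⟩ (fun i U => ⟨T i U.1 U.2, hT i U.1 U.2⟩) i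
  let φ i := m i (U i).1 (U i).2
  have hsucc (i : ℕ) : (U (i + 1)).1 ⊆ (U i).1 ∩ Ioi (φ i) := hTS i _ _
  have hanti : Antitone fun i => (U i).1 :=
    antitone_nat_of_succ_le fun i => (hsucc i).trans inter_subset_left
  have hmem (i : ℕ) : φ i ∈ (U i).1 := hmS i _ _
  have htail (i : ℕ) : φ '' Ioi i ⊆ (U (i + 1)).1 := by
    rintro _ ⟨j, hj, rfl⟩
    exact hanti (Nat.succ_le_of_lt hj) (hmem j)
  refine ⟨φ, strictMono_nat_of_lt_succ fun i => (hsucc i (hmem (i + 1))).2,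
    fun _ ⟨i, hi⟩ => hi ▸ hanti (Nat.zero_le i) (hmem i),
    fun i => hQ_anti _ _ _ _ (htail i) (hQT i _ _)⟩

theorem exists_strictMono_forall_image_Ioi {ι : Type*} [Countable ι] (P : ι → Set ℕ → Prop)
    (hP_anti : ∀ r T T', T' ⊆ T → P r T → P r T')
    (hP : ∀ r S, S.Infinite → ∃ T ⊆ S, T.Infinite ∧ P r T) :
    ∃ φ : ℕ → ℕ, StrictMono φ ∧ ∀ r, ∃ ν, P r (φ '' Ioi ν) := by
  rcases isEmpty_or_nonempty ι with hι | hι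
  · exact ⟨id, strictMono_id, isEmptyElim⟩
  obtain ⟨e, he⟩ := exists_surjective_nat ι
  have hQ (i : ℕ) (S : Set ℕ) (hS : S.Infinite) :
      ∃ m ∈ S, ∃ T ⊆ S ∩ Ioi m, T.Infinite ∧ P (e i) T := by
    obtain ⟨T, hTS, hT, hPT⟩ := hP (e i) S hS
    obtain ⟨m, hm⟩ := hT.nonempty
    exact ⟨m, hTS hm, T ∩ Ioi m, inter_subset_inter_left _ hTS, hT.inter_Ioi m,
      hP_anti _ _ _ inter_subset_left hPT⟩
  obtain ⟨φ, hφ, -, hφP⟩ :=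
    exists_strictMono_diagonal (fun i _ => hP_anti (e i)) hQ infinite_univ
  exact ⟨φ, hφ, fun r => (he r).elim fun i hi => ⟨i, hi ▸ hφP i⟩⟩

theorem exists_infinite_oscillationLE_increasingTuples {α : Type*} [PseudoMetricSpace α]
    [ProperSpace α] (k : ℕ) (g : (Fin k → ℕ) → α) (hg : Bornology.IsBounded (range g))
    {ε : ℝ} (hε : 0 < ε) {S : Set ℕ} (hS : S.Infinite) :
    ∃ T ⊆ S, T.Infinite ∧ OscillationLE g (increasingTuples k T) ε := by
  induction k generalizing ε S with
  | zero =>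
    exact ⟨S, subset_rfl, hS, fun s _ t _ => by rw [Subsingleton.elim s t, dist_self]; exact hε.le⟩
  | succ k ih =>
    obtain ⟨φ, hφ, hφS, hφQ⟩ := exists_strictMono_diagonal
      (Q := fun _ m T => OscillationLE (fun s => g (Fin.cons m s)) (increasingTuples k T) (ε / 3))
      (fun _ _ _ _ hT' hQ => hQ.mono (increasingTuples_mono hT'))
      (fun _ S hS => by
        obtain ⟨m, hm⟩ := hS.nonempty
        obtain ⟨T, hTS, hT, hQ⟩ := ih (fun s => g (Fin.cons m s))
          (hg.subset (range_comp_subset_range _ _)) (ε := ε / 3) (by positivity) (hS.inter_Ioi m)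
        exact ⟨m, hm, T, hTS, hT, hQ⟩) hS
    let c (i : ℕ) : α := g (Fin.cons (φ i) fun t : Fin k => φ (i + 1 + t))
    obtain ⟨a, -, ψ, hψ, hca⟩ := tendsto_subseq_of_bounded (x := c) hg fun i => ⟨_, rfl⟩
    obtain ⟨N, hN⟩ := Metric.tendsto_atTop.1 hca (ε / 6) (by positivity)
    have hclose : ∀ s ∈ increasingTuples (k + 1) (φ '' (ψ '' Ici N)), dist (g s) a ≤ ε / 2 := by
      intro s hs
      obtain ⟨_, ⟨j, hj, rfl⟩, hj0⟩ := hs.2 (mem_range_self 0)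
      have h1 : dist (g s) (c (ψ j)) ≤ ε / 3 := by
        rw [← Fin.cons_self_tail s, ← hj0]
        exact hφQ (ψ j) _ (tail_mem_increasingTuples hφ hs hj0.symm) _
          (shift_mem_increasingTuples hφ k _)
      calc dist (g s) a ≤ dist (g s) (c (ψ j)) + dist (c (ψ j)) a := dist_triangle _ _ _
        _ ≤ ε / 3 + ε / 6 := add_le_add h1 (hN j hj).le
        _ = ε / 2 := by ring
    refine ⟨φ '' (ψ '' Ici N), (image_subset_range _ _).trans hφS,
      ((Ici_infinite N).image hψ.injective.injOn).image hφ.injective.injOn, fun s hs t ht => ?_⟩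
    linarith [dist_triangle_right (g s) (g t) a, hclose s hs, hclose t ht]

theorem exists_forall_dist_le_of_oscillationLE {β α : Type*} [PseudoMetricSpace α]
    [CompleteSpace α] (f : β → α) {A : ℕ → Set β} (hA : Antitone A) (hne : ∀ n, (A n).Nonempty)
    (hosc : ∀ ε > 0, ∃ n, OscillationLE f (A n) ε) :
    ∃ L, ∀ ε > 0, ∃ n, ∀ s ∈ A n, dist (f s) L ≤ ε := by
  choose b hb using hne
  have hcauchy : CauchySeq (f ∘ b) := by
    refine Metric.cauchySeq_iff'.2 fun ε hε => ?_
    obtain ⟨N, hN⟩ := hosc (ε / 2) (half_pos hε)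
    exact ⟨N, fun n hn => (hN _ (hA hn (hb n)) _ (hb N)).trans_lt (half_lt_self hε)⟩
  obtain ⟨L, hL⟩ := cauchySeq_tendsto_of_complete hcauchy
  refine ⟨L, fun ε hε => ?_⟩
  obtain ⟨n, hn⟩ := hosc (ε / 2) (half_pos hε)
  obtain ⟨N, hN⟩ := Metric.tendsto_atTop.1 hL (ε / 2) (half_pos hε)
  refine ⟨n, fun s hs => ?_⟩
  have hbm : b (max n N) ∈ A n := hA (le_max_left n N) (hb _)
  calc dist (f s) L ≤ dist (f s) (f (b (max n N))) + dist (f (b (max n N))) L :=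
        dist_triangle _ _ _
    _ ≤ ε / 2 + ε / 2 := add_le_add (hn s hs _ hbm) (hN _ (le_max_right n N)).le
    _ = ε := add_halves ε

lemma exists_rat_sum_abs_sub_lt {k : ℕ} (c : Fin k → ℝ) {δ : ℝ} (hδ : 0 < δ) :
    ∃ q : Fin k → ℚ, ∑ t, |c t - q t| < δ := by
  have hδ' : 0 < δ / (k + 1) := by positivity
  choose q hq using fun t => exists_rat_near (c t) hδ'
  refine ⟨q, ?_⟩
  calc ∑ t, |c t - q t| ≤ ∑ _t : Fin k, δ / (k + 1) := Finset.sum_le_sum fun t _ => (hq t).le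
    _ = k / (k + 1) * δ := by
        simp only [Finset.sum_const, Finset.card_univ, Fintype.card_fin, nsmul_eq_mul]
        ring
    _ < δ := by
        refine mul_lt_of_lt_one_left hδ ?_
        rw [div_lt_one (by positivity)]
        linarith

section Combination

variable {X : Type*} [NormedAddCommGroup X] [NormedSpace ℝ X] {x : ℕ → X} {C : ℝ} {k : ℕ}

def combNorm (x : ℕ → X) (c : Fin k → ℝ) (s : Fin k → ℕ) : ℝ := ‖∑ t, c t • x (s t)‖

lemma dist_combNorm_le (hx : ∀ n, ‖x n‖ ≤ C) (c c' : Fin k → ℝ) (s : Fin k → ℕ) :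
    dist (combNorm x c s) (combNorm x c' s) ≤ (∑ t, |c t - c' t|) * C := by
  rw [Real.dist_eq, Finset.sum_mul]
  calc |combNorm x c s - combNorm x c' s| ≤ ‖∑ t, c t • x (s t) - ∑ t, c' t • x (s t)‖ :=
        abs_norm_sub_norm_le _ _
    _ = ‖∑ t, (c t - c' t) • x (s t)‖ := by simp only [← Finset.sum_sub_distrib, sub_smul]
    _ ≤ ∑ t, ‖(c t - c' t) • x (s t)‖ := norm_sum_le _ _
    _ ≤ ∑ t, |c t - c' t| * C := Finset.sum_le_sum fun t _ => by
        rw [norm_smul, Real.norm_eq_abs]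
        exact mul_le_mul_of_nonneg_left (hx _) (abs_nonneg _)

lemma isBounded_range_combNorm (hx : ∀ n, ‖x n‖ ≤ C) (c : Fin k → ℝ) :
    Bornology.IsBounded (range (combNorm x c)) := by
  refine (Metric.isBounded_iff_subset_closedBall 0).2 ⟨(∑ t, |c t|) * C, ?_⟩
  rintro _ ⟨s, rfl⟩
  simpa [combNorm] using dist_combNorm_le hx c 0 s

lemma exists_oscillationLE_combNorm_of_rat (hx : ∀ n, ‖x n‖ ≤ C) {A : ℕ → Set (Fin k → ℕ)}
    (hA : ∀ q : Fin k → ℚ, ∀ ε > 0, ∃ n, OscillationLE (combNorm x fun i => q i) (A n) ε)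
    (c : Fin k → ℝ) : ∀ ε > 0, ∃ n, OscillationLE (combNorm x c) (A n) ε := by
  intro ε hε
  have hC : 0 ≤ C := (norm_nonneg _).trans (hx 0)
  obtain ⟨q, hq⟩ := exists_rat_sum_abs_sub_lt c (δ := ε / (3 * (C + 1))) (by positivity)
  have happrox (s : Fin k → ℕ) :
      dist (combNorm x c s) (combNorm x (fun i => q i) s) ≤ ε / 3 := by
    refine (dist_combNorm_le hx c _ s).trans ?_
    calc (∑ t, |c t - q t|) * C ≤ ε / (3 * (C + 1)) * C := by gcongr
      _ ≤ ε / 3 := by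
        rw [div_mul_eq_mul_div, div_le_div_iff₀ (by positivity) (by positivity)]
        nlinarith
  obtain ⟨n, hn⟩ := hA q (ε / 3) (by positivity)
  refine ⟨n, fun s hs t ht => ?_⟩
  calc dist (combNorm x c s) (combNorm x c t)
      ≤ dist (combNorm x c s) (combNorm x (fun i => q i) s) +
        dist (combNorm x c t) (combNorm x (fun i => q i) t) +
        dist (combNorm x (fun i => q i) s) (combNorm x (fun i => q i) t) :=
          dist_triangle4_right _ _ _ _
    _ ≤ ε / 3 + ε / 3 + ε / 3 := add_le_add (add_le_add (happrox s) (happrox t)) (hn s hs t ht)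
    _ = ε := by ring

end Combination

theorem brunel_sucheston_general
    (X : Type*) [NormedAddCommGroup X] [NormedSpace ℝ X]
    (x : ℕ → X) (hx : ∃ C : ℝ, ∀ n, ‖x n‖ ≤ C) :
    ∃ φ : ℕ → ℕ, StrictMono φ ∧
      ∀ a : ℕ →₀ ℝ, ∃ L : ℝ, ∀ ε : ℝ, 0 < ε →
        ∃ ν : ℕ, 0 < ν ∧ ∀ n : ℕ → ℕ, StrictMono n → (∀ i, ν ≤ n i) →
          |‖∑ i ∈ a.support, a i • x (φ (n i))‖ - L| ≤ ε := by
  obtain ⟨C, hC⟩ := hx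
  obtain ⟨φ, hφ, hφosc⟩ := exists_strictMono_forall_image_Ioi (ι := (Σ k, Fin k → ℚ) × ℕ)
    (fun r T => OscillationLE (combNorm x fun i => r.1.2 i) (increasingTuples r.1.1 T)
      (1 / (r.2 + 1)))
    (fun _ _ _ hT' h => h.mono (increasingTuples_mono hT'))
    (fun _ _ hS => exists_infinite_oscillationLE_increasingTuples _ _
      (isBounded_range_combNorm hC _) (by positivity) hS)
  refine ⟨φ, hφ, fun a => ?_⟩
  let e := a.support.orderEmbOfFin rfl
  have hrat (q : Fin a.support.card → ℚ) (ε : ℝ) (hε : 0 < ε) :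
      ∃ ν, OscillationLE (combNorm x fun i => q i) (increasingTuples _ (φ '' Ioi ν)) ε := by
    obtain ⟨m, hm⟩ := exists_nat_one_div_lt hε
    obtain ⟨ν, hν⟩ := hφosc (⟨_, q⟩, m)
    exact ⟨ν, fun s hs t ht => (hν s hs t ht).trans hm.le⟩
  obtain ⟨L, hL⟩ := exists_forall_dist_le_of_oscillationLE (combNorm x fun t => a (e t))
    (fun _ _ h => increasingTuples_mono (image_mono (Ioi_subset_Ioi h)))
    (fun ν => ⟨_, shift_mem_increasingTuples hφ _ ν⟩)
    (exists_oscillationLE_combNorm_of_rat hC hrat _)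
  refine ⟨L, fun ε hε => ?_⟩
  obtain ⟨ν, hν⟩ := hL ε hε
  refine ⟨ν + 1, ν.succ_pos, fun n hn hnν => ?_⟩
  have hmem : φ ∘ n ∘ e ∈ increasingTuples _ (φ '' Ioi ν) :=
    ⟨hφ.comp (hn.comp e.strictMono), by rintro _ ⟨t, rfl⟩; exact ⟨_, hnν _, rfl⟩⟩
  have hsum : ∑ i ∈ a.support, a i • x (φ (n i)) = ∑ t, a (e t) • x (φ (n (e t))) := by
    conv_lhs => rw [← a.support.map_orderEmbOfFin_univ rfl, Finset.sum_map]
    rfl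
  rw [hsum, ← Real.dist_eq]
  exact hν _ hmem

/-- **Proposition (Brunel–Sucheston).**  Every bounded sequence in a real Banach space
contains a subsequence `e_n = x_{φ(n)}` such that for every finitely supported sequence of
reals `a` there is a limit `L(a)`: for every `ε > 0` there is `ν` such that
`|‖∑ i, a i • e (n i)‖ - L(a)| ≤ ε` for all strictly increasing choices of indices
`n` with all values `≥ ν`. -/
theorem brunel_sucheston
    (X : Type*) [NormedAddCommGroup X] [NormedSpace ℝ X] [CompleteSpace X]
    (x : ℕ → X) (hx : ∃ C : ℝ, ∀ n, ‖x n‖ ≤ C) :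
    ∃ φ : ℕ → ℕ, StrictMono φ ∧
      ∀ a : ℕ →₀ ℝ, ∃ L : ℝ, ∀ ε : ℝ, 0 < ε →
        ∃ ν : ℕ, 0 < ν ∧ ∀ n : ℕ → ℕ, StrictMono n → (∀ i, ν ≤ n i) →
          |‖∑ i ∈ a.support, a i • x (φ (n i))‖ - L| ≤ ε :=
  brunel_sucheston_general X x hx
end

section
/- Let (e_n) be a sequence in a real Banach space X with ‖e_n‖ → 1, let c, s ≥ 0 be reals not both zero, and suppose there exists a real number L such that for every ε > 0 there exists a positive integer ν with |‖c·e_i + s·e_j‖ − L| ≤ ε for all integers ν ≤ i < j. Then L ≥ max{ c(c+s)/(c+2s), s(c+s)/(2c+s) }. -/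
/-!
For `i < j < k` the two identities
`c(c+s) e_i = c(c e_i + s e_j) + s(c e_i + s e_k) - s(c e_j + s e_k)` and
`s(c+s) e_k = c(c e_i + s e_k) + s(c e_j + s e_k) - c(c e_i + s e_j)`
bound `c(c+s)‖e_i‖` by `(c+2s)` and `s(c+s)‖e_k‖` by `(2c+s)` times the largest of the three
pair norms. Taking `(i, j, k) = (n, n+1, n+2)` and letting `n → ∞` gives
`c(c+s) ≤ (c+2s) L` and `s(c+s) ≤ (2c+s) L`.
-/

open Filter Topology

section PairSums

variable {X : Type*} [SeminormedAddCommGroup X] [NormedSpace ℝ X] {c s : ℝ}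

lemma norm_smul_add_smul_sub_smul_le {a b d : ℝ} (ha : 0 ≤ a) (hb : 0 ≤ b) (hd : 0 ≤ d)
    (p q r : X) : ‖a • p + b • q - d • r‖ ≤ a * ‖p‖ + b * ‖q‖ + d * ‖r‖ := by
  calc ‖a • p + b • q - d • r‖ ≤ ‖a • p‖ + ‖b • q‖ + ‖d • r‖ :=
        norm_sub_le_of_le (norm_add_le _ _) le_rfl
    _ = a * ‖p‖ + b * ‖q‖ + d * ‖r‖ := by
        rw [norm_smul_of_nonneg ha, norm_smul_of_nonneg hb, norm_smul_of_nonneg hd]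

lemma mul_norm_first_le (hc : 0 ≤ c) (hs : 0 ≤ s) (x y z : X) :
    c * (c + s) * ‖x‖ ≤
      c * ‖c • x + s • y‖ + s * ‖c • x + s • z‖ + s * ‖c • y + s • z‖ := by
  have hx : (c * (c + s)) • x = c • (c • x + s • y) + s • (c • x + s • z) - s • (c • y + s • z) := by
    module
  rw [← norm_smul_of_nonneg (by positivity), hx]
  exact norm_smul_add_smul_sub_smul_le hc hs hs _ _ _

lemma mul_norm_last_le (hc : 0 ≤ c) (hs : 0 ≤ s) (x y z : X) :
    s * (c + s) * ‖z‖ ≤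
      c * ‖c • x + s • z‖ + s * ‖c • y + s • z‖ + c * ‖c • x + s • y‖ := by
  have hz : (s * (c + s)) • z = c • (c • x + s • z) + s • (c • y + s • z) - c • (c • x + s • y) := by
    module
  rw [← norm_smul_of_nonneg (by positivity), hz]
  exact norm_smul_add_smul_sub_smul_le hc hs hc _ _ _

end PairSums

lemma tendsto_comp_of_forall_pairs {u : ℕ → ℕ → ℝ} {L : ℝ}
    (hu : ∀ ε : ℝ, 0 < ε → ∃ ν : ℕ, ∀ i j : ℕ, ν ≤ i → i < j → |u i j - L| ≤ ε)
    {a b : ℕ → ℕ} (ha : Tendsto a atTop atTop) (hab : ∀ n, a n < b n) :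
    Tendsto (fun n => u (a n) (b n)) atTop (𝓝 L) := by
  rw [Metric.tendsto_atTop]
  intro ε hε
  obtain ⟨ν, hν⟩ := hu (ε / 2) (half_pos hε)
  obtain ⟨N, hN⟩ := eventually_atTop.1 (ha.eventually_ge_atTop ν)
  exact ⟨N, fun n hn => (hν _ _ (hN n hn) (hab n)).trans_lt (half_lt_self hε)⟩

theorem BS_limit_lower_bound_general
    (X : Type*) [NormedAddCommGroup X] [NormedSpace ℝ X]
    (e : ℕ → X)
    (hnorm : Tendsto (fun n => ‖e n‖) atTop (nhds 1))
    (c s : ℝ) (hc : 0 ≤ c) (hs : 0 ≤ s)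
    (L : ℝ)
    (hL : ∀ ε : ℝ, 0 < ε → ∃ ν : ℕ, 0 < ν ∧
      ∀ i j : ℕ, ν ≤ i → i < j → |‖c • e i + s • e j‖ - L| ≤ ε) :
    max (c * (c + s) / (c + 2 * s)) (s * (c + s) / (2 * c + s)) ≤ L := by
  have hu := fun ε hε => (hL ε hε).imp fun _ h => h.2
  have h01 := tendsto_comp_of_forall_pairs hu tendsto_id (b := (· + 1)) fun n => by simp
  have h02 := tendsto_comp_of_forall_pairs hu tendsto_id (b := (· + 2)) fun n => by simp
  have h12 := tendsto_comp_of_forall_pairs hu (tendsto_add_atTop_nat 1) (b := (· + 2))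
    fun n => by simp
  have hL0 : 0 ≤ L := ge_of_tendsto' h01 fun _ => norm_nonneg _
  have hfirst : c * (c + s) * 1 ≤ c * L + s * L + s * L :=
    le_of_tendsto_of_tendsto' (hnorm.const_mul _)
      (((h01.const_mul c).add (h02.const_mul s)).add (h12.const_mul s))
      fun n => mul_norm_first_le hc hs (e n) (e (n + 1)) (e (n + 2))
  have hlast : s * (c + s) * 1 ≤ c * L + s * L + c * L :=
    le_of_tendsto_of_tendsto' ((hnorm.comp (tendsto_add_atTop_nat 2)).const_mul _)
      (((h02.const_mul c).add (h12.const_mul s)).add (h01.const_mul c))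
      fun n => mul_norm_last_le hc hs (e n) (e (n + 1)) (e (n + 2))
  exact max_le (div_le_of_le_mul₀ (by positivity) hL0 (by linarith))
    (div_le_of_le_mul₀ (by positivity) hL0 (by linarith))

/-- **Proposition (lower estimate for the Brunel–Sucheston limit `L(c,s)`).**
If `‖e_n‖ → 1`, `c, s ≥ 0` are not both zero, and `‖c • e_i + s • e_j‖ → L` as
`i < j` tend to infinity, then `L ≥ max{c(c+s)/(c+2s), s(c+s)/(2c+s)}`. -/
theorem BS_limit_lower_bound
    (X : Type*) [NormedAddCommGroup X] [NormedSpace ℝ X] [CompleteSpace X]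
    (e : ℕ → X)
    (hnorm : Tendsto (fun n => ‖e n‖) atTop (nhds 1))
    (c s : ℝ) (hc : 0 ≤ c) (hs : 0 ≤ s) (hcs : ¬(c = 0 ∧ s = 0))
    (L : ℝ)
    (hL : ∀ ε : ℝ, 0 < ε → ∃ ν : ℕ, 0 < ν ∧
      ∀ i j : ℕ, ν ≤ i → i < j → |‖c • e i + s • e j‖ - L| ≤ ε) :
    max (c * (c + s) / (c + 2 * s)) (s * (c + s) / (2 * c + s)) ≤ L :=
  BS_limit_lower_bound_general X e hnorm c s hc hs L hL
end

section
/- For every τ ∈ [0, π/2], max{ cos(τ)·(cos(τ)+sin(τ))/(cos(τ)+2·sin(τ)), sin(τ)·(cos(τ)+sin(τ))/(2·cos(τ)+sin(τ)) } ≥ √2/3. -/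
open Real

/-- **Remark (elementary trigonometric estimate).**  For every `τ ∈ [0, π/2]`,
`max{cos τ (cos τ + sin τ)/(cos τ + 2 sin τ), sin τ (cos τ + sin τ)/(2 cos τ + sin τ)} ≥ √2/3`. -/
theorem trig_max_ge_sqrt_two_div_three
    (τ : ℝ) (hτ : τ ∈ Set.Icc 0 (π / 2)) :
    Real.sqrt 2 / 3 ≤
      max (Real.cos τ * (Real.cos τ + Real.sin τ) / (Real.cos τ + 2 * Real.sin τ))
        (Real.sin τ * (Real.cos τ + Real.sin τ) / (2 * Real.cos τ + Real.sin τ)) := by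
  obtain ⟨h0, h1⟩ := hτ
  have hc : 0 ≤ Real.cos τ := Real.cos_nonneg_of_mem_Icc ⟨by linarith [Real.pi_pos], h1⟩
  have hs : 0 ≤ Real.sin τ := Real.sin_nonneg_of_nonneg_of_le_pi h0 (by linarith [Real.pi_pos])
  have hp : Real.sin τ ^ 2 + Real.cos τ ^ 2 = 1 := Real.sin_sq_add_cos_sq τ
  have hr : Real.sqrt 2 ^ 2 = 2 := Real.sq_sqrt (by norm_num)
  have hr0 : 0 ≤ Real.sqrt 2 := Real.sqrt_nonneg 2
  set c := Real.cos τ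
  set s := Real.sin τ
  have hsum : 1 ≤ c + s := by nlinarith
  rcases le_total s c with h | h
  · refine le_trans ?_ (le_max_left _ _)
    rw [div_le_div_iff₀ (by norm_num) (by nlinarith)]
    nlinarith [sq_nonneg (c - s), sq_nonneg (Real.sqrt 2 * c - 1), sq_nonneg (c + s - Real.sqrt 2), mul_nonneg hc hs]
  · refine le_trans ?_ (le_max_right _ _)
    rw [div_le_div_iff₀ (by norm_num) (by nlinarith)]
    nlinarith [sq_nonneg (s - c), sq_nonneg (Real.sqrt 2 * s - 1), sq_nonneg (c + s - Real.sqrt 2), mul_nonneg hc hs]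
end

section
/- Let X be a real Banach space. For each i ≥ 1 let U_i be a finite set, for each u ∈ U_i let T_i(u) ⊆ [0, π/2] be a finite set, and for each u ∈ ⋃_i U_i let (v_n(u))_{n≥1} be a sequence in X with 1 ≤ ‖v_n(u)‖ for all n and ‖v_n(u)‖ → 1 as n → ∞. Then for every ζ > 0 there exists a strictly increasing map n : ℕ → ℕ such that for every i ≥ 1, every u ∈ U_i, and every τ ∈ T_i(u), one has ‖cos(τ)·v_{n(i)}(u) + sin(τ)·v_{n(i+1)}(u)‖ ≥ √2/(3·(1+ζ)). -/
/-!
If `s ≤ c`, then `c (c + s) x = c (c x + s y) + s (c x + s z) - s (c y + s z)`, so for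
`‖x‖ ≥ 1` one of the three norms `‖c x + s y‖`, `‖c x + s z‖`, `‖c y + s z‖` is at least
`c (c + s) / (c + 2 s) ≥ √2 / 3` (symmetrically with `z` if `c ≤ s`). Hence, along a nonprincipal
ultrafilter `𝒰` on `ℕ`, for `𝒰`-almost every `a` the pair `(a, b)` is good for `𝒰`-almost every `b`:
otherwise three successive bad choices would give a triple with all three pairs bad. For each
step `i` only finitely many pairs `(u, τ)` occur, so their conditions still hold `𝒰`-almost
surely, and the indices `n i` can be chosen one after another inside these `𝒰`-large sets.
-/

open Real Filter

lemma sqrt_two_mul_add_two_mul_le {c s : ℝ} (hs : 0 ≤ s) (hsc : s ≤ c) (hcs : c ^ 2 + s ^ 2 = 1) :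
    √2 * (c + 2 * s) ≤ 3 * (c * (c + s)) := by
  have h2c : √2 ≤ 2 * c := Real.sqrt_le_iff.mpr ⟨by nlinarith, by nlinarith⟩
  nlinarith [mul_nonneg (add_nonneg hs (hs.trans hsc)) (sub_nonneg.2 h2c),
    mul_nonneg hs (sub_nonneg.2 h2c), mul_nonneg (hs.trans hsc) (sub_nonneg.2 hsc)]

section Norms

variable {E : Type*} [NormedAddCommGroup E] [NormedSpace ℝ E]

lemma mul_add_le_of_one_le_norm {x : E} (y z : E) (hx : 1 ≤ ‖x‖) {c s : ℝ} (hc : 0 ≤ c)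
    (hs : 0 ≤ s) :
    c * (c + s) ≤ c * ‖c • x + s • y‖ + s * ‖c • x + s • z‖ + s * ‖c • y + s • z‖ :=
  calc c * (c + s) ≤ c * (c + s) * ‖x‖ := le_mul_of_one_le_right (by positivity) hx
    _ = ‖(c * (c + s)) • x‖ := by rw [norm_smul, Real.norm_of_nonneg (by positivity)]
    _ = ‖c • (c • x + s • y) + s • (c • x + s • z) - s • (c • y + s • z)‖ := by
      congr 1; module
    _ ≤ c * ‖c • x + s • y‖ + s * ‖c • x + s • z‖ + s * ‖c • y + s • z‖ := by
      refine norm_sub_le_of_le (norm_add_le_of_le ?_ ?_) ?_ <;>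
        rw [norm_smul, Real.norm_of_nonneg (by assumption)]

lemma sqrt_two_div_three_le_norm_or {x z : E} (y : E) (hx : 1 ≤ ‖x‖) (hz : 1 ≤ ‖z‖)
    {c s : ℝ} (hc : 0 ≤ c) (hs : 0 ≤ s) (hcs : c ^ 2 + s ^ 2 = 1) :
    √2 / 3 ≤ ‖c • x + s • y‖ ∨ √2 / 3 ≤ ‖c • x + s • z‖ ∨ √2 / 3 ≤ ‖c • y + s • z‖ := by
  wlog hsc : s ≤ c generalizing c s x z
  · have := this hz hx hs hc (by linarith) (le_of_not_ge hsc)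
    rw [add_comm (s • z), add_comm (s • z), add_comm (s • y)] at this
    tauto
  by_contra! hlt
  obtain ⟨hxy, hxz, hyz⟩ := hlt
  have hc_pos : 0 < c := by nlinarith
  nlinarith [mul_add_le_of_one_le_norm y z hx hc hs, sqrt_two_mul_add_two_mul_le hs hsc hcs,
    mul_lt_mul_of_pos_left hxy hc_pos, mul_le_mul_of_nonneg_left hxz.le hs,
    mul_le_mul_of_nonneg_left hyz.le hs]

end Norms

section Ultrafilter

variable {α : Type*} [Preorder α]

lemma Ultrafilter.eventually_eventually_of_forall_lt_lt_or (𝒰 : Ultrafilter α)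
    (h𝒰 : ∀ a, ∀ᶠ b in (𝒰 : Filter α), a < b) {r : α → α → Prop}
    (hr : ∀ x y z, x < y → y < z → r x y ∨ r x z ∨ r y z) :
    ∀ᶠ a in 𝒰, ∀ᶠ b in 𝒰, r a b := by
  by_contra h
  have hbad : ∀ᶠ a in 𝒰, ∀ᶠ b in 𝒰, ¬r a b := by
    simpa only [← Ultrafilter.eventually_not] using h
  obtain ⟨x, hx⟩ := hbad.exists
  obtain ⟨y, hxy, hrxy, hy⟩ := ((h𝒰 x).and (hx.and hbad)).exists
  obtain ⟨z, hyz, hrxz, hryz⟩ := ((h𝒰 y).and (hx.and hy)).exists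
  rcases hr x y z hxy hyz with h | h | h <;> contradiction

lemma exists_strictMono_forall_of_eventually_eventually {l : Filter α} [l.NeBot]
    (hl : ∀ a, ∀ᶠ b in l, a < b) {r : ℕ → α → α → Prop}
    (hr : ∀ i, ∀ᶠ a in l, ∀ᶠ b in l, r i a b) :
    ∃ n : ℕ → α, StrictMono n ∧ ∀ i, r i (n i) (n (i + 1)) := by
  let G : ℕ → Set α := fun i => {a | ∀ᶠ b in l, r i a b}
  have step : ∀ i a, ∃ b, a < b ∧ (a ∈ G i → r i a b ∧ b ∈ G (i + 1)) := by
    intro i a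
    by_cases ha : a ∈ G i
    · obtain ⟨b, hab, hb⟩ := ((hl a).and (Filter.Eventually.and ha (hr (i + 1)))).exists
      exact ⟨b, hab, fun _ => hb⟩
    · obtain ⟨b, hab⟩ := (hl a).exists
      exact ⟨b, hab, fun h => absurd h ha⟩
  choose next hlt hnext using step
  obtain ⟨a₀, ha₀⟩ := (hr 0).exists
  let n : ℕ → α := fun i => Nat.rec a₀ next i
  have hmem : ∀ i, n i ∈ G i := by
    intro i
    induction i with
    | zero => exact ha₀
    | succ i ih => exact (hnext i (n i) ih).2
  exact ⟨n, strictMono_nat_of_lt_succ fun i => hlt i (n i), fun i => (hnext i (n i) (hmem i)).1⟩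

lemma Ultrafilter.eventually_eventually_sqrt_two_div_three_le_norm {E : Type*}
    [NormedAddCommGroup E] [NormedSpace ℝ E] {w : α → E} (hw : ∀ a, 1 ≤ ‖w a‖) {c s : ℝ}
    (hc : 0 ≤ c) (hs : 0 ≤ s) (hcs : c ^ 2 + s ^ 2 = 1) (𝒰 : Ultrafilter α)
    (h𝒰 : ∀ a, ∀ᶠ b in (𝒰 : Filter α), a < b) :
    ∀ᶠ a in 𝒰, ∀ᶠ b in 𝒰, √2 / 3 ≤ ‖c • w a + s • w b‖ :=
  𝒰.eventually_eventually_of_forall_lt_lt_or h𝒰 fun x y z _ _ =>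
    sqrt_two_div_three_le_norm_or (w y) (hw x) (hw z) hc hs hcs

end Ultrafilter

theorem subsequence_selection_general
    (X : Type*) [NormedAddCommGroup X] [NormedSpace ℝ X]
    (ι : Type*)
    (U : ℕ → Finset ι)
    (T : ℕ → ι → Finset ℝ)
    (hT : ∀ i u, ∀ τ ∈ T i u, τ ∈ Set.Icc 0 (π / 2))
    (v : ι → ℕ → X)
    (hv_lb : ∀ u n, 1 ≤ ‖v u n‖)
    (ζ : ℝ) (hζ : 0 < ζ) :
    ∃ n : ℕ → ℕ, StrictMono n ∧
      ∀ i : ℕ, 1 ≤ i → ∀ u ∈ U i, ∀ τ ∈ T i u,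
        Real.sqrt 2 / (3 * (1 + ζ)) ≤
          ‖Real.cos τ • v u (n i) + Real.sin τ • v u (n (i + 1))‖ := by
  have hgt : ∀ a : ℕ, ∀ᶠ b in hyperfilter ℕ, a < b := fun a =>
    hyperfilter_le_cofinite (Nat.cofinite_eq_atTop ▸ eventually_gt_atTop a)
  have hbound : √2 / (3 * (1 + ζ)) ≤ √2 / 3 :=
    div_le_div_of_nonneg_left (sqrt_nonneg 2) (by norm_num) (by linarith)
  have hgood : ∀ i, ∀ᶠ a in hyperfilter ℕ, ∀ᶠ b in hyperfilter ℕ, ∀ u ∈ U i, ∀ τ ∈ T i u,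
      √2 / (3 * (1 + ζ)) ≤ ‖cos τ • v u a + sin τ • v u b‖ := by
    simp_rw [eventually_all_finset]
    intro i u _ τ hτ
    obtain ⟨hτ₀, hτ₁⟩ := hT i u τ hτ
    have hcos : 0 ≤ cos τ := cos_nonneg_of_mem_Icc ⟨by linarith [pi_pos], hτ₁⟩
    have hsin : 0 ≤ sin τ := sin_nonneg_of_nonneg_of_le_pi hτ₀ (by linarith [pi_pos])
    filter_upwards [(hyperfilter ℕ).eventually_eventually_sqrt_two_div_three_le_norm (hv_lb u)
      hcos hsin (cos_sq_add_sin_sq τ) hgt] with a ha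
    exact ha.mono fun b hb => hbound.trans hb
  obtain ⟨n, hn, hn_good⟩ := exists_strictMono_forall_of_eventually_eventually hgt hgood
  exact ⟨n, hn, fun i _ => hn_good i⟩

/-- **Proposition (subsequence selection via Brunel–Sucheston sequences).**
Given, for each `i ≥ 1`, a finite set `U i` of directions, for each direction `u` a finite
set `T i u ⊆ [0, π/2]` of angles, and for each direction a sequence `v u` in a Banach space
`X` with `1 ≤ ‖v u n‖` and `‖v u n‖ → 1`, then for each `ζ > 0` one can select a strictly
increasing sequence of indices `n` so that for all `i ≥ 1`, `u ∈ U i`, `τ ∈ T i u`,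
`‖cos τ • v u (n i) + sin τ • v u (n (i+1))‖ ≥ √2 / (3 (1 + ζ))`. -/
theorem subsequence_selection
    (X : Type*) [NormedAddCommGroup X] [NormedSpace ℝ X] [CompleteSpace X]
    (ι : Type*)
    (U : ℕ → Finset ι)
    (T : ℕ → ι → Finset ℝ)
    (hT : ∀ i u, ∀ τ ∈ T i u, τ ∈ Set.Icc 0 (π / 2))
    (v : ι → ℕ → X)
    (hv_lb : ∀ u n, 1 ≤ ‖v u n‖)
    (hv_lim : ∀ u, Tendsto (fun n => ‖v u n‖) atTop (nhds 1))
    (ζ : ℝ) (hζ : 0 < ζ) :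
    ∃ n : ℕ → ℕ, StrictMono n ∧
      ∀ i : ℕ, 1 ≤ i → ∀ u ∈ U i, ∀ τ ∈ T i u,
        Real.sqrt 2 / (3 * (1 + ζ)) ≤
          ‖Real.cos τ • v u (n i) + Real.sin τ • v u (n (i + 1))‖ :=
  subsequence_selection_general X ι U T hT v hv_lb ζ hζ
end

section
/- Let Y be a real normed space, ε ∈ (0,1), and let τ : [0,∞) → [0,π/2] be a continuous nondecreasing function, differentiable at all but finitely many points of (0,∞), with 0 ≤ τ'(t) ≤ ε/t at every point of differentiability. Then for all x, y ∈ Y with ‖x‖ ≥ ‖y‖ > 0, one has 0 ≤ 2·sin((τ(‖x‖) − τ(‖y‖))/2) ≤ (ε/‖y‖)·‖x − y‖. -/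
open Real Set

/-- Split `[a, b]` at the exceptional points one at a time, applying the classical mean value
inequality on each piece. -/
lemma sub_le_mul_sub_of_deriv_le_of_finite {f : ℝ → ℝ} {C : ℝ} {S : Set ℝ} (hS : S.Finite)
    {a b : ℝ} (hab : a ≤ b) (hf : ContinuousOn f (Icc a b))
    (hderiv : ∀ t ∈ Ioo a b \ S, DifferentiableAt ℝ f t ∧ deriv f t ≤ C) :
    f b - f a ≤ C * (b - a) := by
  induction S, hS using Set.Finite.induction_on generalizing a b with
  | empty =>
    simp only [sdiff_empty] at hderiv
    refine (convex_Icc a b).image_sub_le_mul_sub_of_deriv_le hf ?_ ?_ a (left_mem_Icc.2 hab) b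
      (right_mem_Icc.2 hab) hab <;> rw [interior_Icc]
    exacts [fun t ht => (hderiv t ht).1.differentiableWithinAt, fun t ht => (hderiv t ht).2]
  | @insert s T _ _ ih =>
    have hsub : ∀ {a' b'}, Ioo a' b' ⊆ Ioo a b → s ∉ Ioo a' b' →
        ∀ t ∈ Ioo a' b' \ T, DifferentiableAt ℝ f t ∧ deriv f t ≤ C := by
      rintro a' b' hIoo hs t ⟨ht, htT⟩
      refine hderiv t ⟨hIoo ht, ?_⟩
      rintro (rfl | htT')
      exacts [hs ht, htT htT']
    by_cases hs : s ∈ Ioo a b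
    · have left : f s - f a ≤ C * (s - a) :=
        ih hs.1.le (hf.mono (Icc_subset_Icc_right hs.2.le))
          (hsub (Ioo_subset_Ioo_right hs.2.le) fun h => lt_irrefl s h.2)
      have right : f b - f s ≤ C * (b - s) :=
        ih hs.2.le (hf.mono (Icc_subset_Icc_left hs.1.le))
          (hsub (Ioo_subset_Ioo_left hs.1.le) fun h => lt_irrefl s h.1)
      linarith
    · exact ih hab hf (hsub subset_rfl hs)

lemma two_mul_sin_half_le_self {s : ℝ} (hs : 0 ≤ s) : 2 * sin (s / 2) ≤ s := by
  linarith [sin_le (by positivity : 0 ≤ s / 2)]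

/-- **The mean-value estimate for the gluing coefficient.**  If `τ : [0,∞) → [0,π/2]` is
continuous, nondecreasing, differentiable at all but finitely many points of `(0,∞)`, with
`0 ≤ τ' ≤ ε/t` wherever it is differentiable, then for `‖x‖ ≥ ‖y‖ > 0` one has
`0 ≤ 2 sin((τ‖x‖ - τ‖y‖)/2) ≤ (ε/‖y‖) ‖x - y‖`. -/
theorem gluing_coefficient_estimate
    (Y : Type*) [NormedAddCommGroup Y] [NormedSpace ℝ Y]
    (ε : ℝ) (hε : ε ∈ Set.Ioo (0 : ℝ) 1)
    (τ : ℝ → ℝ)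
    (hτrange : ∀ t ∈ Set.Ici (0 : ℝ), τ t ∈ Set.Icc 0 (π / 2))
    (hτcont : ContinuousOn τ (Set.Ici 0))
    (hτmono : MonotoneOn τ (Set.Ici 0))
    (hτdiff : ∃ S : Set ℝ, S.Finite ∧ ∀ t ∈ Set.Ioi (0 : ℝ) \ S, DifferentiableAt ℝ τ t)
    (hτderiv : ∀ t : ℝ, 0 < t → DifferentiableAt ℝ τ t →
      0 ≤ deriv τ t ∧ deriv τ t ≤ ε / t)
    (x y : Y) (hy : 0 < ‖y‖) (hyx : ‖y‖ ≤ ‖x‖) :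
    0 ≤ 2 * Real.sin ((τ ‖x‖ - τ ‖y‖) / 2) ∧
      2 * Real.sin ((τ ‖x‖ - τ ‖y‖) / 2) ≤ ε / ‖y‖ * ‖x - y‖ := by
  obtain ⟨S, hS, hτS⟩ := hτdiff
  have hx : 0 < ‖x‖ := hy.trans_le hyx
  have hgap_nonneg : 0 ≤ τ ‖x‖ - τ ‖y‖ := sub_nonneg.2 (hτmono hy.le hx.le hyx)
  have hgap_le : τ ‖x‖ - τ ‖y‖ ≤ π / 2 := by
    linarith [(hτrange _ hy.le).1, (hτrange _ hx.le).2]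
  have hmvt : τ ‖x‖ - τ ‖y‖ ≤ ε / ‖y‖ * (‖x‖ - ‖y‖) := by
    refine sub_le_mul_sub_of_deriv_le_of_finite hS hyx
      (hτcont.mono fun t ht => hy.le.trans ht.1) fun t ⟨ht, htS⟩ => ?_
    have ht0 : 0 < t := hy.trans ht.1
    have hdiff := hτS t ⟨ht0, htS⟩
    exact ⟨hdiff, (hτderiv t ht0 hdiff).2.trans (div_le_div_of_nonneg_left hε.1.le hy ht.1.le)⟩
  refine ⟨mul_nonneg zero_le_two (sin_nonneg_of_nonneg_of_le_pi (by linarith) (by linarith)), ?_⟩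
  calc 2 * sin ((τ ‖x‖ - τ ‖y‖) / 2) ≤ τ ‖x‖ - τ ‖y‖ := two_mul_sin_half_le_self hgap_nonneg
    _ ≤ ε / ‖y‖ * (‖x‖ - ‖y‖) := hmvt
    _ ≤ ε / ‖y‖ * ‖x - y‖ := mul_le_mul_of_nonneg_left (norm_sub_norm_le x y)
      (div_nonneg hε.1.le hy.le)
end
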